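/- Let N be a complete normal subgroup of an n-space group Γ with V = Span(N). Then Γ is torsion-free if and only if N is torsion-free and the induced action of Γ/N on (V/N) × V^⊥ is free. -/

import Mathlib

/-- Euclidean n-space, as `Fin n → ℝ` with the dot product as inner product. -/
abbrev Eu (n : ℕ) : Type := Fin n → ℝ

/-- An isometry `a + A` of Euclidean n-space: `x ↦ a + A x` with `A` orthogonal. -/
@[ext] structure Iso (n : ℕ) where
  a : Eu n
  A : Matrix.orthogonalGroup (Fin n) ℝ

namespace Iso

variable {n : ℕ}

/-- The matrix part of an isometry. -/
def mat (φ : Iso n) : Matrix (Fin n) (Fin n) ℝ := φ.A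

instance : Mul (Iso n) := ⟨fun φ ψ => ⟨φ.a + φ.mat.mulVec ψ.a, φ.A * ψ.A⟩⟩
instance : One (Iso n) := ⟨⟨0, 1⟩⟩
instance : Inv (Iso n) :=
  ⟨fun φ => ⟨-(Matrix.mulVec ((φ.A⁻¹ : Matrix.orthogonalGroup (Fin n) ℝ) : Matrix (Fin n) (Fin n) ℝ) φ.a), φ.A⁻¹⟩⟩

@[simp] lemma mul_a (φ ψ : Iso n) : (φ * ψ).a = φ.a + φ.mat.mulVec ψ.a := rfl
@[simp] lemma mul_A (φ ψ : Iso n) : (φ * ψ).A = φ.A * ψ.A := rfl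
@[simp] lemma one_a : (1 : Iso n).a = 0 := rfl
@[simp] lemma one_A : (1 : Iso n).A = 1 := rfl
@[simp] lemma inv_A (φ : Iso n) : (φ⁻¹).A = φ.A⁻¹ := rfl
@[simp] lemma mat_mul (φ ψ : Iso n) : (φ * ψ).mat = φ.mat * ψ.mat := rfl
@[simp] lemma mat_one : (1 : Iso n).mat = 1 := rfl

instance : Group (Iso n) where
  mul_assoc φ ψ χ := by
    ext1
    · simp [Matrix.mulVec_add, ← Matrix.mulVec_mulVec, add_assoc]
    · exact mul_assoc _ _ _
  one_mul φ := by
    ext1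
    · simp
    · exact one_mul _
  mul_one φ := by
    ext1
    · simp
    · exact mul_one _
  inv_mul_cancel φ := by
    ext1
    · show (φ⁻¹).a + (φ⁻¹).mat.mulVec φ.a = (0 : Eu n)
      show -(Matrix.mulVec _ φ.a) + Matrix.mulVec _ φ.a = (0 : Eu n)
      exact neg_add_cancel _
    · exact inv_mul_cancel _

instance : SMul (Iso n) (Eu n) := ⟨fun φ x => φ.a + φ.mat.mulVec x⟩

lemma smul_def (φ : Iso n) (x : Eu n) : φ • x = φ.a + φ.mat.mulVec x := rfl

instance : MulAction (Iso n) (Eu n) where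
  one_smul x := by
    show (0 : Eu n) + (1 : Iso n).mat.mulVec x = x
    simp
  mul_smul φ ψ x := by
    show (φ * ψ).a + (φ * ψ).mat.mulVec x = φ.a + φ.mat.mulVec (ψ.a + ψ.mat.mulVec x)
    simp [Matrix.mulVec_add, ← Matrix.mulVec_mulVec, add_assoc]

/-- The translation `x ↦ v + x`. -/
def tr (v : Eu n) : Iso n := ⟨v, 1⟩

instance : TopologicalSpace (Iso n) :=
  TopologicalSpace.induced (fun φ => (φ.a, φ.mat)) inferInstance

end Iso

/-- The orthogonal complement of a subspace of Euclidean n-space,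
with respect to the standard (dot product) inner product. -/
def perp {n : ℕ} (V : Submodule ℝ (Eu n)) : Submodule ℝ (Eu n) where
  carrier := {x | ∀ v ∈ V, dotProduct v x = 0}
  add_mem' := by
    intro x y hx hy v hv
    simp [dotProduct_add, hx v hv, hy v hv]
  zero_mem' := by
    intro v hv
    simp
  smul_mem' := by
    intro c x hx v hv
    simp [dotProduct_smul, hx v hv]

/-- The span of a subgroup of isometries: the real span of the translation
vectors of the pure translations in it. -/
def spanOf {n : ℕ} (H : Subgroup (Iso n)) : Submodule ℝ (Eu n) :=
  Submodule.span ℝ {v : Eu n | Iso.tr v ∈ H}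

/-- `N` is a normal subgroup of `Γ` (as subgroups of the isometry group). -/
def NormalIn {n : ℕ} (N Γ : Subgroup (Iso n)) : Prop :=
  N ≤ Γ ∧ ∀ γ ∈ Γ, ∀ ν ∈ N, γ * ν * γ⁻¹ ∈ N

/-- An n-space group: a discrete subgroup of the isometry group of Euclidean
n-space with compact orbit space. -/
def IsSpaceGroup {n : ℕ} (Γ : Subgroup (Iso n)) : Prop :=
  DiscreteTopology Γ ∧
    IsCompact (Set.univ : Set (Quotient (MulAction.orbitRel Γ (Eu n))))

/-- `N` is a complete normal subgroup of `Γ`. -/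
def IsCompleteNormal {n : ℕ} (N Γ : Subgroup (Iso n)) : Prop :=
  NormalIn N Γ ∧
    ∀ g : Iso n, g ∈ N ↔
      (g ∈ Γ ∧ g.a ∈ spanOf N ∧ ∀ x ∈ perp (spanOf N), (Iso.mat g).mulVec x = x)

/-- A monoid is torsion-free if no nontrivial element has finite order
(the definition `Monoid.IsTorsionFree` of the older Mathlib, since removed). -/
def Monoid.IsTorsionFree (G : Type*) [Monoid G] : Prop :=
  ∀ g : G, g ≠ 1 → ¬IsOfFinOrder g

section Aux

open Iso Matrix

variable {n : ℕ}

lemma pow_A (g : Iso n) (k : ℕ) : (g ^ k).A = g.A ^ k := by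
  induction k with
  | zero => rw [pow_zero, pow_zero]; rfl
  | succ k ih => rw [pow_succ, pow_succ, Iso.mul_A, ih]

lemma pow_mat_mem (g : Iso n) (k : ℕ) :
    (g ^ k).mat ∈ Matrix.orthogonalGroup (Fin n) ℝ := by
  have : (g ^ k).mat = ((g.A ^ k : Matrix.orthogonalGroup (Fin n) ℝ) : Matrix (Fin n) (Fin n) ℝ) := by
    rw [Iso.mat, pow_A]
  rw [this]
  exact SetLike.coe_mem _

lemma inv_mat (g : Iso n) : (g⁻¹).mat = star g.mat := by
  show ((g.A⁻¹ : Matrix.orthogonalGroup (Fin n) ℝ) : Matrix (Fin n) (Fin n) ℝ) = star (g.A : Matrix (Fin n) (Fin n) ℝ)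
  exact Matrix.UnitaryGroup.inv_val g.A

lemma inv_a (g : Iso n) : (g⁻¹).a = -((star g.mat).mulVec g.a) := by
  show -(Matrix.mulVec ((g.A⁻¹ : Matrix.orthogonalGroup (Fin n) ℝ) : Matrix (Fin n) (Fin n) ℝ) g.a) = _
  rw [Matrix.UnitaryGroup.inv_val g.A]
  rfl

/-- The embedding of `Iso n` into the product space. -/
def isoEmb : Iso n → (Eu n) × Matrix (Fin n) (Fin n) ℝ := fun φ => (φ.a, φ.mat)

/-- The "difference" map mimicking `φ * ψ⁻¹` on the product space. -/
def muMap : ((Eu n) × Matrix (Fin n) (Fin n) ℝ) × ((Eu n) × Matrix (Fin n) (Fin n) ℝ) →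
    (Eu n) × Matrix (Fin n) (Fin n) ℝ :=
  fun q => (q.1.1 - (q.1.2 * star q.2.2).mulVec q.2.1, q.1.2 * star q.2.2)

lemma isoEmb_mul_inv (φ ψ : Iso n) : isoEmb (φ * ψ⁻¹) = muMap (isoEmb φ, isoEmb ψ) := by
  have h1 : (φ * ψ⁻¹).mat = φ.mat * star ψ.mat := by rw [Iso.mat_mul, inv_mat]
  have h2 : (φ * ψ⁻¹).a = φ.a - (φ.mat * star ψ.mat).mulVec ψ.a := by
    rw [Iso.mul_a, inv_a, Matrix.mulVec_neg, ← Matrix.mulVec_mulVec, sub_eq_add_neg]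
  simp only [isoEmb, muMap, h1, h2]

lemma continuous_muMap : Continuous (muMap (n := n)) := by
  have hm : Continuous fun q : ((Eu n) × Matrix (Fin n) (Fin n) ℝ) × ((Eu n) × Matrix (Fin n) (Fin n) ℝ) =>
      q.1.2 * star q.2.2 :=
    (continuous_snd.comp continuous_fst).matrix_mul
      ((continuous_snd.comp continuous_snd).matrix_conjTranspose)
  exact Continuous.prodMk
    ((continuous_fst.comp continuous_fst).sub (hm.matrix_mulVec (continuous_fst.comp continuous_snd)))
    hm

lemma isCompact_orth : IsCompact {M : Matrix (Fin n) (Fin n) ℝ | M ∈ Matrix.orthogonalGroup (Fin n) ℝ} := by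
  have hclosed : IsClosed {M : Matrix (Fin n) (Fin n) ℝ | M ∈ Matrix.orthogonalGroup (Fin n) ℝ} := by
    have : {M : Matrix (Fin n) (Fin n) ℝ | M ∈ Matrix.orthogonalGroup (Fin n) ℝ}
        = (fun M : Matrix (Fin n) (Fin n) ℝ => star M * M) ⁻¹' {1} := by
      ext M
      simp only [Set.mem_setOf_eq, Set.mem_preimage, Set.mem_singleton_iff]
      exact Matrix.mem_orthogonalGroup_iff' (Fin n) ℝ
    rw [this]
    exact IsClosed.preimage ((continuous_id.matrix_conjTranspose).matrix_mul continuous_id)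
      isClosed_singleton
  have hball : IsCompact ((Set.pi Set.univ fun _ : Fin n =>
      Set.pi Set.univ fun _ : Fin n => Set.Icc (-1:ℝ) 1) : Set (Matrix (Fin n) (Fin n) ℝ)) :=
    isCompact_univ_pi fun _ => isCompact_univ_pi fun _ => isCompact_Icc
  have hsub : {M : Matrix (Fin n) (Fin n) ℝ | M ∈ Matrix.orthogonalGroup (Fin n) ℝ} ⊆
      ((Set.pi Set.univ fun _ : Fin n =>
      Set.pi Set.univ fun _ : Fin n => Set.Icc (-1:ℝ) 1) : Set (Matrix (Fin n) (Fin n) ℝ)) := by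
    intro M hM
    have h1 : star M * M = 1 := (Matrix.mem_orthogonalGroup_iff' (Fin n) ℝ).mp hM
    intro i _ j _
    have hdiag : ∑ k, M k j * M k j = 1 := by
      have h2 : (star M * M) j j = (1 : Matrix (Fin n) (Fin n) ℝ) j j := by rw [h1]
      rw [Matrix.mul_apply, Matrix.one_apply_eq] at h2
      simpa [Matrix.star_apply] using h2
    have hle : M i j * M i j ≤ 1 := by
      rw [← hdiag]
      exact Finset.single_le_sum (fun k _ => mul_self_nonneg (M k j)) (Finset.mem_univ i)
    constructor
    · nlinarith [hle]
    · nlinarith [hle]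
  exact hball.of_isClosed_subset hclosed hsub
end Aux

section Aux2

open Iso Filter

variable {n : ℕ}

lemma fix_smul_pow {g : Iso n} {x : Eu n} (hfix : g • x = x) (k : ℕ) : (g ^ k) • x = x := by
  induction k with
  | zero => rw [pow_zero, one_smul]
  | succ k ih => rw [pow_succ, mul_smul, hfix, ih]

lemma no_inf_order_of_fix {Γ : Subgroup (Iso n)} (hd : DiscreteTopology Γ)
    {g : Iso n} (hg : g ∈ Γ) {x : Eu n} (hfix : g • x = x)
    (hinj : Function.Injective fun k : ℕ => g ^ k) : False := by
  -- the sequence of embeddings of powers of `g` lies in a compact set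
  set K : Set ((Eu n) × Matrix (Fin n) (Fin n) ℝ) :=
    (fun M : Matrix (Fin n) (Fin n) ℝ => (x - M.mulVec x, M)) ''
      {M : Matrix (Fin n) (Fin n) ℝ | M ∈ Matrix.orthogonalGroup (Fin n) ℝ} with hK
  have hKc : IsCompact K :=
    isCompact_orth.image (Continuous.prodMk
      (continuous_const.sub (continuous_id.matrix_mulVec continuous_const)) continuous_id)
  have hmem : ∀ k : ℕ, isoEmb (g ^ k) ∈ K := by
    intro k
    refine ⟨(g ^ k).mat, pow_mat_mem g k, ?_⟩
    have h1 := fix_smul_pow hfix k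
    rw [Iso.smul_def] at h1
    have h2 : (g ^ k).a = x - (g ^ k).mat.mulVec x := by
      rw [eq_sub_iff_add_eq]; exact h1
    simp [isoEmb, h2]
  haveI : FirstCountableTopology (Matrix (Fin n) (Fin n) ℝ) :=
    inferInstanceAs (FirstCountableTopology (Fin n → Fin n → ℝ))
  obtain ⟨p, hpK, φ, hφ, hlim⟩ := hKc.tendsto_subseq hmem
  -- the matrix part of the limit is orthogonal
  have hporth : p.2 * star p.2 = 1 := by
    obtain ⟨M, hM, rfl⟩ := hpK
    exact (Matrix.mem_orthogonalGroup_iff (Fin n) ℝ).mp hM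
  -- the "difference" sequence tends to (0, 1)
  have hlim2 : Tendsto (fun i => ((isoEmb (g ^ φ (i + 1)), isoEmb (g ^ φ i)) :
      ((Eu n) × Matrix (Fin n) (Fin n) ℝ) × ((Eu n) × Matrix (Fin n) (Fin n) ℝ)))
      atTop (nhds (p, p)) :=
    Tendsto.prodMk_nhds (hlim.comp (tendsto_add_atTop_nat 1)) hlim
  have hmu : muMap (p, p) = ((0 : Eu n), (1 : Matrix (Fin n) (Fin n) ℝ)) := by
    simp only [muMap, hporth, Matrix.one_mulVec, sub_self]
  have hlim3 : Tendsto (fun i => muMap (isoEmb (g ^ φ (i + 1)), isoEmb (g ^ φ i)))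
      atTop (nhds ((0 : Eu n), (1 : Matrix (Fin n) (Fin n) ℝ))) := by
    rw [← hmu]
    exact (continuous_muMap.tendsto (p, p)).comp hlim2
  -- discreteness: a neighborhood of the identity meeting `Γ` only in 1
  have h1open : IsOpen ({1} : Set Γ) := isOpen_discrete _
  obtain ⟨U, hU, hU1⟩ := isOpen_induced_iff.mp h1open
  obtain ⟨W, hW, hWU⟩ := isOpen_induced_iff.mp hU
  have hWmem : ((0 : Eu n), (1 : Matrix (Fin n) (Fin n) ℝ)) ∈ W := by
    have h1U : (1 : Iso n) ∈ U := by
      have : ((1 : Γ) : Iso n) ∈ U := by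
        rw [← Set.mem_preimage, hU1]; rfl
      simpa using this
    have := hWU ▸ h1U
    simpa [isoEmb] using (Set.mem_preimage.mp (hWU ▸ h1U : (1 : Iso n) ∈ (fun φ : Iso n => (φ.a, φ.mat)) ⁻¹' W))
  have hev : ∀ᶠ i in atTop, muMap (isoEmb (g ^ φ (i + 1)), isoEmb (g ^ φ i)) ∈ W :=
    hlim3.eventually (hW.eventually_mem hWmem)
  obtain ⟨i, hi⟩ := hev.exists
  rw [← isoEmb_mul_inv] at hi
  -- hence the corresponding element of Γ is trivial
  set h : Iso n := g ^ φ (i + 1) * (g ^ φ i)⁻¹ with hh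
  have hhΓ : h ∈ Γ := mul_mem (pow_mem hg _) (inv_mem (pow_mem hg _))
  have hhU : h ∈ U := by
    rw [← hWU]
    exact hi
  have hh1 : h = 1 := by
    have : (⟨h, hhΓ⟩ : Γ) ∈ ({1} : Set Γ) := by
      rw [← hU1]
      exact hhU
    simpa [Subtype.ext_iff] using this
  have : g ^ φ (i + 1) = g ^ φ i := by
    rwa [mul_inv_eq_one] at hh1
  have := hinj this
  exact absurd this (Nat.ne_of_gt (hφ (Nat.lt_succ_self i)))

end Aux2
section Aux3

variable {n : ℕ}

lemma exists_perp_decomp (V : Submodule ℝ (Eu n)) (p : Eu n) :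
    ∃ v ∈ V, ∃ w ∈ perp V, p = v + w := by
  let e : EuclideanSpace ℝ (Fin n) ≃ₗ[ℝ] Eu n := WithLp.linearEquiv 2 ℝ (Eu n)
  let V' : Submodule ℝ (EuclideanSpace ℝ (Fin n)) := V.comap (e : EuclideanSpace ℝ (Fin n) →ₗ[ℝ] Eu n)
  obtain ⟨y, hy, z, hz, hyz⟩ := V'.exists_add_mem_mem_orthogonal (e.symm p)
  refine ⟨e y, hy, e z, ?_, ?_⟩
  · intro u hu
    have huV' : e.symm u ∈ V' := by
      simp only [V', Submodule.mem_comap]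
      simpa using hu
    have hz' := (Submodule.mem_orthogonal _ _).mp hz (e.symm u) huV'
    have : dotProduct u (e z) = inner ℝ (e.symm u) z := by
      rw [PiLp.inner_apply]
      simp [dotProduct, e, mul_comm]
    rw [this, hz']
  · have := congrArg e hyz
    rwa [e.apply_symm_apply, map_add] at this

lemma exists_fixed_of_pow_eq_one (γ : Iso n) {k : ℕ} (hk : k ≠ 0) (h : γ ^ k = 1) :
    ∃ p : Eu n, γ • p = p := by
  classical
  set s : Eu n := ∑ i ∈ Finset.range k, (γ ^ i) • (0 : Eu n) with hs
  refine ⟨(k : ℝ)⁻¹ • s, ?_⟩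
  have hk' : (k : ℝ) ≠ 0 := Nat.cast_ne_zero.mpr hk
  -- the shifted sum equals the sum
  have hshift : ∑ i ∈ Finset.range k, (γ ^ (i + 1)) • (0 : Eu n) = s := by
    have h2 := Finset.sum_range_succ' (fun i => (γ ^ i) • (0 : Eu n)) k
    have h3 := Finset.sum_range_succ (fun i => (γ ^ i) • (0 : Eu n)) k
    have h4 : (γ ^ k) • (0 : Eu n) = (γ ^ 0) • (0 : Eu n) := by rw [h, pow_zero]
    rw [h3] at h2
    -- h2 : s + f k = (∑ f (i+1)) + f 0
    rw [pow_zero, one_smul] at h4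
    rw [h4, pow_zero, one_smul] at h2
    exact (add_right_cancel h2.symm)
  -- main computation
  have key : (k : ℝ) • (γ • ((k : ℝ)⁻¹ • s)) = (k : ℝ) • ((k : ℝ)⁻¹ • s) := by
    rw [Iso.smul_def, smul_add, Matrix.mulVec_smul, smul_inv_smul₀ hk', smul_inv_smul₀ hk']
    -- ⊢ (k:ℝ) • γ.a + γ.mat.mulVec s = s
    have hlin : γ.mat.mulVec s = ∑ i ∈ Finset.range k, γ.mat.mulVec ((γ ^ i) • (0 : Eu n)) := by
      rw [hs]
      exact map_sum (Matrix.mulVecLin γ.mat) _ _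
    rw [hlin]
    have hconst : (k : ℝ) • γ.a = ∑ _i ∈ Finset.range k, γ.a := by
      rw [Finset.sum_const, Finset.card_range, ← Nat.cast_smul_eq_nsmul ℝ]
    rw [hconst, ← Finset.sum_add_distrib]
    have : ∀ i, γ.a + γ.mat.mulVec ((γ ^ i) • (0 : Eu n)) = (γ ^ (i + 1)) • (0 : Eu n) := by
      intro i
      rw [pow_succ', mul_smul]
      rfl
    simp only [this]
    rw [hshift]
  exact smul_right_injective (Eu n) hk' key

end Aux3
/-- Lemma 2: `Γ` is torsion-free iff `N` is torsion-free and `Γ/N` acts freely on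
`V/N × V^⊥`.  Freeness of the action of `Γ/N` on `V/N × V^⊥` is expressed concretely:
if some `γ ∈ Γ` fixes the class of a point `(Nv, w)` with `v ∈ V`, `w ∈ V^⊥`
(i.e. `γ • (v + w) = ν • v + w` for some `ν ∈ N`), then `γ ∈ N`. -/
theorem torsionfree_iff_free_action {n : ℕ} (Γ N : Subgroup (Iso n))
    (hΓ : IsSpaceGroup Γ) (hN : IsCompleteNormal N Γ) :
    Monoid.IsTorsionFree Γ ↔
      (Monoid.IsTorsionFree N ∧
        ∀ γ ∈ Γ, (∃ v ∈ spanOf N, ∃ w ∈ perp (spanOf N), ∃ ν ∈ N,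
          γ • (v + w) = ν • v + w) → γ ∈ N) := by
  obtain ⟨hd, -⟩ := hΓ
  obtain ⟨⟨hle, -⟩, hchar⟩ := hN
  constructor
  · intro htf
    constructor
    · -- N is torsion-free
      intro ν hν1 hord
      obtain ⟨k, hk0, hk⟩ := isOfFinOrder_iff_pow_eq_one.mp hord
      have hkIso : (ν : Iso n) ^ k = 1 := by
        have := congrArg (Subtype.val) hk
        rwa [SubgroupClass.coe_pow, OneMemClass.coe_one] at this
      refine htf ⟨(ν : Iso n), hle ν.2⟩ ?_ ?_
      · intro hcontra
        apply hν1
        apply Subtype.ext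
        exact congrArg (fun g : Γ => (g : Iso n)) hcontra
      · refine isOfFinOrder_iff_pow_eq_one.mpr ⟨k, hk0, ?_⟩
        apply Subtype.ext
        simpa using hkIso
    · -- the action is free
      rintro γ hγ ⟨v, hv, w, hw, ν, hν, heq⟩
      have hνΓ := hle hν
      have hBw : (Iso.mat ν).mulVec w = w := ((hchar ν).mp hν).2.2 w hw
      have hν_vw : ν • (v + w) = ν • v + w := by
        rw [Iso.smul_def, Iso.smul_def, Matrix.mulVec_add, hBw, ← add_assoc]
      have hfix : (ν⁻¹ * γ) • (v + w) = v + w := by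
        rw [mul_smul, heq, ← hν_vw, inv_smul_smul]
      have hmemΓ : ν⁻¹ * γ ∈ Γ := mul_mem (inv_mem hνΓ) hγ
      have h1 : ν⁻¹ * γ = 1 := by
        by_contra hne
        have hne' : (⟨ν⁻¹ * γ, hmemΓ⟩ : Γ) ≠ 1 := by
          simpa [Subtype.ext_iff] using hne
        have hnford := htf _ hne'
        have hinjΓ : Function.Injective fun k : ℕ => (⟨ν⁻¹ * γ, hmemΓ⟩ : Γ) ^ k :=
          injective_pow_iff_not_isOfFinOrder.mpr hnford
        have hinj : Function.Injective fun k : ℕ => (ν⁻¹ * γ) ^ k := by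
          intro a b hab
          apply hinjΓ
          apply Subtype.ext
          simpa using hab
        exact no_inf_order_of_fix hd hmemΓ hfix hinj
      have hγν : ν = γ := by rwa [inv_mul_eq_one] at h1
      rw [← hγν]
      exact hν
  · rintro ⟨htfN, hfree⟩ γΓ hne hord
    obtain ⟨k, hk0, hk⟩ := isOfFinOrder_iff_pow_eq_one.mp hord
    have hkIso : (γΓ : Iso n) ^ k = 1 := by
      have := congrArg (Subtype.val) hk
      rwa [SubgroupClass.coe_pow, OneMemClass.coe_one] at this
    obtain ⟨p, hp⟩ := exists_fixed_of_pow_eq_one _ hk0.ne' hkIso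
    obtain ⟨v, hv, w, hw, rfl⟩ := exists_perp_decomp (spanOf N) p
    have hγN : (γΓ : Iso n) ∈ N :=
      hfree _ γΓ.2 ⟨v, hv, w, hw, 1, one_mem N, by rw [one_smul]; exact hp⟩
    have hne' : (⟨(γΓ : Iso n), hγN⟩ : N) ≠ 1 := by
      intro hcontra
      apply hne
      apply Subtype.ext
      exact congrArg (fun g : N => (g : Iso n)) hcontra
    refine htfN ⟨(γΓ : Iso n), hγN⟩ hne' ?_
    refine isOfFinOrder_iff_pow_eq_one.mpr ⟨k, hk0, ?_⟩
    apply Subtype.ext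
    simpa using hkIso
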